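/- The graph G(Z*_{12}) satisfies 11/5 ≤ ldim_f(G(Z*_{12})) ≤ 11/2. -/

import Mathlib

open Finset

/-- A local resolving function of a graph `G`: a map `ζ : V → [0,1]` such that for every
pair of adjacent vertices `u v`, the sum of `ζ` over the local resolving neighborhood
`R{u,v} = {w : d(w,u) ≠ d(w,v)}` is at least `1`. -/
def IsLocalResolvingFunction {V : Type*} [Fintype V] (G : SimpleGraph V) (ζ : V → ℝ) : Prop :=
  (∀ w, ζ w ∈ Set.Icc (0 : ℝ) 1) ∧
    ∀ u v, G.Adj u v →
      1 ≤ ∑ w ∈ Finset.univ.filter (fun w => G.dist w u ≠ G.dist w v), ζ w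

/-- The local fractional metric dimension of `G`: the minimum of `∑ v, ζ v` over all
local resolving functions `ζ` of `G`. -/
noncomputable def ldimf {V : Type*} [Fintype V] (G : SimpleGraph V) : ℝ :=
  sInf {s : ℝ | ∃ ζ : V → ℝ, IsLocalResolvingFunction G ζ ∧ s = ∑ v, ζ v}

/-- The graph `G(Z*_n)`: vertices are the nonzero residues `1, …, n-1` of `Z_n`,
two distinct vertices `x, y` being adjacent iff `x·y mod n` is not a unit of `Z_n`,
i.e. `gcd(x·y, n) > 1`. -/
def zStarGraph (n : ℕ) : SimpleGraph {x : Fin n // x.val ≠ 0} where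
  Adj x y := x ≠ y ∧ 1 < Nat.gcd (x.1.val * y.1.val) n
  symm := ⟨fun x y ⟨h1, h2⟩ => ⟨h1.symm, by rwa [Nat.mul_comm]⟩⟩
  loopless := ⟨fun x ⟨h, _⟩ => h rfl⟩

/-!
The constant function `1/2` resolves every edge through its two endpoints, giving the upper
bound `11/2`. For the lower bound, a nonunit `u` of `ℤ_12` is adjacent to every other vertex,
since `gcd(u, 12) ∣ gcd(wu, 12)`. Hence, for two distinct nonunits `u, v`, every other vertex
is at distance `1` from both, so `R{u,v} = {u, v}` and `ζ u + ζ v ≥ 1`. The disjoint pairs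
`{2,3}, {4,6}, {8,9}` of nonunits force `∑ ζ ≥ 3 ≥ 11/5`.
-/

lemma SimpleGraph.Adj.dist_self_ne_dist {V : Type*} {G : SimpleGraph V} {u v : V}
    (huv : G.Adj u v) : G.dist u u ≠ G.dist u v := by
  rw [SimpleGraph.dist_self, SimpleGraph.dist_eq_one_iff_adj.2 huv]
  exact zero_ne_one

section LocalResolvingFunction

variable {V : Type*} [Fintype V] {G : SimpleGraph V}

lemma isLocalResolvingFunction_const_half (G : SimpleGraph V) :
    IsLocalResolvingFunction G (fun _ => 1 / 2) := by
  classical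
  refine ⟨fun _ => ⟨by norm_num, by norm_num⟩, fun u v huv => ?_⟩
  have hpair : ({u, v} : Finset V) ⊆ univ.filter (fun w => G.dist w u ≠ G.dist w v) := by
    intro w hw
    rcases mem_insert.1 hw with rfl | hw
    · simpa using huv.dist_self_ne_dist
    · rw [mem_singleton.1 hw]
      simpa [eq_comm] using huv.symm.dist_self_ne_dist
  calc (1 : ℝ) = ∑ _ ∈ ({u, v} : Finset V), 1 / 2 := by
          rw [sum_pair huv.ne]; norm_num
    _ ≤ _ := sum_le_sum_of_subset_of_nonneg hpair fun _ _ _ => by norm_num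

lemma IsLocalResolvingFunction.sum_nonneg {ζ : V → ℝ} (hζ : IsLocalResolvingFunction G ζ) :
    0 ≤ ∑ v, ζ v :=
  Finset.sum_nonneg fun w _ => (hζ.1 w).1

lemma ldimf_le_sum {ζ : V → ℝ} (hζ : IsLocalResolvingFunction G ζ) : ldimf G ≤ ∑ v, ζ v :=
  csInf_le ⟨0, by rintro s ⟨ζ', hζ', rfl⟩; exact hζ'.sum_nonneg⟩ ⟨ζ, hζ, rfl⟩

lemma le_ldimf {c : ℝ} (h : ∀ ζ, IsLocalResolvingFunction G ζ → c ≤ ∑ v, ζ v) :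
    c ≤ ldimf G :=
  le_csInf ⟨_, _, isLocalResolvingFunction_const_half G, rfl⟩ <| by
    rintro s ⟨ζ, hζ, rfl⟩
    exact h ζ hζ

lemma ldimf_le_card_div_two (G : SimpleGraph V) : ldimf G ≤ Fintype.card V / 2 := by
  convert ldimf_le_sum (isLocalResolvingFunction_const_half G) using 1
  simp [div_eq_mul_inv]

/-- Two distinct universal vertices are resolved only by themselves. -/
lemma IsLocalResolvingFunction.one_le_add_of_universal {ζ : V → ℝ}
    (hζ : IsLocalResolvingFunction G ζ) {u v : V} (huv : u ≠ v)
    (hu : ∀ w, w ≠ u → G.Adj w u) (hv : ∀ w, w ≠ v → G.Adj w v) : 1 ≤ ζ u + ζ v := by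
  classical
  have hsub : univ.filter (fun w => G.dist w u ≠ G.dist w v) ⊆ {u, v} := by
    intro w hw
    by_contra hw'
    simp only [mem_insert, mem_singleton, not_or] at hw'
    simp only [mem_filter, mem_univ, true_and] at hw
    rw [SimpleGraph.dist_eq_one_iff_adj.2 (hu w hw'.1),
      SimpleGraph.dist_eq_one_iff_adj.2 (hv w hw'.2)] at hw
    exact hw rfl
  calc 1 ≤ ∑ w ∈ univ.filter (fun w => G.dist w u ≠ G.dist w v), ζ w :=
        hζ.2 u v (hu v huv.symm).symm
    _ ≤ ∑ w ∈ {u, v}, ζ w := sum_le_sum_of_subset_of_nonneg hsub fun w _ _ => (hζ.1 w).1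
    _ = ζ u + ζ v := sum_pair huv

end LocalResolvingFunction

lemma zStarGraph_adj_of_one_lt_gcd {n : ℕ} {u : {x : Fin n // x.val ≠ 0}}
    (hu : 1 < Nat.gcd u.1.val n) (w : {x : Fin n // x.val ≠ 0}) (hwu : w ≠ u) :
    (zStarGraph n).Adj w u :=
  ⟨hwu, hu.trans_le <| Nat.le_of_dvd (Nat.gcd_pos_of_pos_right _ u.1.pos)
    (Nat.gcd_dvd_gcd_mul_left_left _ _ _)⟩

lemma three_le_sum_of_isLocalResolvingFunction_zStarGraph_twelve {ζ : _ → ℝ}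
    (hζ : IsLocalResolvingFunction (zStarGraph 12) ζ) : 3 ≤ ∑ v, ζ v := by
  have hpair (u v : {x : Fin 12 // x.val ≠ 0}) (hu : 1 < Nat.gcd u.1.val 12)
      (hv : 1 < Nat.gcd v.1.val 12) (huv : u ≠ v) : 1 ≤ ζ u + ζ v :=
    hζ.one_le_add_of_universal huv (zStarGraph_adj_of_one_lt_gcd hu)
      (zStarGraph_adj_of_one_lt_gcd hv)
  let vtx (a : Fin 12) (ha : a.val ≠ 0 := by decide) : {x : Fin 12 // x.val ≠ 0} := ⟨a, ha⟩
  have h23 := hpair (vtx 2) (vtx 3) (by decide) (by decide) (by decide)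
  have h46 := hpair (vtx 4) (vtx 6) (by decide) (by decide) (by decide)
  have h89 := hpair (vtx 8) (vtx 9) (by decide) (by decide) (by decide)
  have hsub : ∑ w ∈ {vtx 2, vtx 3, vtx 4, vtx 6, vtx 8, vtx 9}, ζ w ≤ ∑ v, ζ v :=
    sum_le_univ_sum_of_nonneg fun w => (hζ.1 w).1
  rw [sum_insert (by decide), sum_insert (by decide), sum_insert (by decide),
    sum_insert (by decide), sum_pair (by decide)] at hsub
  linarith

/-- `11/5 ≤ ldimf(G(Z*_{12})) ≤ 11/2`. -/
theorem ldimf_zStarGraph_twelve :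
    (11 : ℝ) / 5 ≤ ldimf (zStarGraph 12) ∧ ldimf (zStarGraph 12) ≤ (11 : ℝ) / 2 := by
  refine ⟨le_ldimf fun ζ hζ => ?_, ?_⟩
  · linarith [three_le_sum_of_isLocalResolvingFunction_zStarGraph_twelve hζ]
  · calc ldimf (zStarGraph 12) ≤ Fintype.card {x : Fin 12 // x.val ≠ 0} / 2 :=
          ldimf_le_card_div_two _
      _ = 11 / 2 := by norm_num [show Fintype.card {x : Fin 12 // x.val ≠ 0} = 11 by decide]
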